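/- Let Ω ⊂ ℂ be a finely open set and let z ∈ Ω. Then there exists a compact set K ⊂ Ω which is a fine neighborhood of z (i.e., K contains a finely open set containing z). -/

import Mathlib

open MeasureTheory Set ENNReal

/-- The truncation of an extended real number to `ℝ≥0∞`. -/
noncomputable def erealToENNReal (x : EReal) : ℝ≥0∞ :=
  if x = ⊤ then ⊤ else ENNReal.ofReal x.toReal

/-- The (upper) integral of an `EReal`-valued function over a set of reals,
computed as the difference of the `lintegral`s of the positive and negative parts. -/
noncomputable def erealSetIntegral (s : Set ℝ) (g : ℝ → EReal) : EReal :=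
  ((∫⁻ θ in s, erealToENNReal (g θ) : ℝ≥0∞) : EReal)
    - ((∫⁻ θ in s, erealToENNReal (-(g θ)) : ℝ≥0∞) : EReal)

/-- `u` is plurisubharmonic on `U ⊆ ℂⁿ`: it takes values in `[-∞, ∞)`, is upper
semicontinuous on `U`, and satisfies the sub-mean value inequality over every circle
(in every complex line) whose corresponding closed disc lies in `U`. -/
def PSHOn (n : ℕ) (U : Set (Fin n → ℂ)) (u : (Fin n → ℂ) → EReal) : Prop :=
  (∀ z ∈ U, u z < ⊤) ∧ UpperSemicontinuousOn u U ∧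
  ∀ a b : Fin n → ℂ, ∀ r : ℝ, 0 < r →
    (∀ t : ℂ, ‖t‖ ≤ r → a + t • b ∈ U) →
    ((2 * Real.pi : ℝ) : EReal) * u a ≤
      erealSetIntegral (Set.Ioc 0 (2 * Real.pi))
        (fun θ => u (a + ((r : ℂ) * Complex.exp ((θ : ℂ) * Complex.I)) • b))

/-- A set `P ⊆ ℂⁿ` is pluripolar if there is a plurisubharmonic function on `ℂⁿ`,
not identically `-∞`, which is `-∞` on `P`. -/
def Pluripolar (n : ℕ) (P : Set (Fin n → ℂ)) : Prop :=
  ∃ u : (Fin n → ℂ) → EReal, PSHOn n Set.univ u ∧ (∃ z, u z ≠ ⊥) ∧ ∀ z ∈ P, u z = ⊥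

/-- `L ⊆ ℂⁿ` is thin at `z₀`: there are a neighborhood `U` of `z₀` and a negative
plurisubharmonic function `u` on `U` with `u ≤ -1` on `(L \ {z₀}) ∩ U` and `u z₀ > -1/4`. -/
def ThinAtCn (n : ℕ) (L : Set (Fin n → ℂ)) (z₀ : Fin n → ℂ) : Prop :=
  ∃ U : Set (Fin n → ℂ), IsOpen U ∧ z₀ ∈ U ∧
    ∃ u : (Fin n → ℂ) → EReal, PSHOn n U u ∧ (∀ z ∈ U, u z < 0) ∧
      (∀ z ∈ (L \ {z₀}) ∩ U, u z ≤ ((-1 : ℝ) : EReal)) ∧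
      ((-(1 / 4 : ℝ) : ℝ) : EReal) < u z₀

/-- `M ⊆ ℂⁿ` is a maximal totally real submanifold of class `C^k`: near each of its
points it is the image of a `C^k` embedding of an open subset of `ℝⁿ` whose differential
is injective and whose tangent space (the range of the differential) contains no
complex line. -/
def MaximalTotallyReal (n : ℕ) (k : ℕ∞) (M : Set (Fin n → ℂ)) : Prop :=
  ∀ z ∈ M, ∃ (U : Set (Fin n → ℂ)) (V : Set (Fin n → ℝ))
      (φ : (Fin n → ℝ) → (Fin n → ℂ)) (x : Fin n → ℝ),
    IsOpen U ∧ z ∈ U ∧ IsOpen V ∧ x ∈ V ∧ φ x = z ∧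
    ContDiffOn ℝ k φ V ∧ Set.InjOn φ V ∧ M ∩ U = φ '' V ∧
    (∀ y ∈ V, Function.Injective (fderivWithin ℝ φ V y)) ∧
    (∀ y ∈ V, ∀ w : Fin n → ℂ, w ∈ Set.range (fderivWithin ℝ φ V y) → w ≠ 0 →
      (fun j => Complex.I * w j) ∉ Set.range (fderivWithin ℝ φ V y))

/-- `u` is subharmonic on `U ⊆ ℂ`: values in `[-∞, ∞)`, upper semicontinuous, and the
sub-mean value inequality holds over every circle whose closed disc lies in `U`. -/
def SubharmonicOnC (U : Set ℂ) (u : ℂ → EReal) : Prop :=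
  (∀ z ∈ U, u z < ⊤) ∧ UpperSemicontinuousOn u U ∧
  ∀ a : ℂ, ∀ r : ℝ, 0 < r → (∀ t : ℂ, ‖t‖ ≤ r → a + t ∈ U) →
    ((2 * Real.pi : ℝ) : EReal) * u a ≤
      erealSetIntegral (Set.Ioc 0 (2 * Real.pi))
        (fun θ => u (a + (r : ℂ) * Complex.exp ((θ : ℂ) * Complex.I)))

/-- `F ⊆ ℂ` is thin at `z₀`: there is a subharmonic function `u` on `ℂ` with
`u ≤ -1` on `F` and `u z₀ > -1`. -/
def ThinAtC (F : Set ℂ) (z₀ : ℂ) : Prop :=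
  ∃ u : ℂ → EReal, SubharmonicOnC Set.univ u ∧
    (∀ z ∈ F, u z ≤ ((-1 : ℝ) : EReal)) ∧ ((-1 : ℝ) : EReal) < u z₀

/-- The fine topology on `ℂ`: the coarsest topology making all subharmonic
functions on `ℂ` continuous. -/
noncomputable def fineTopology : TopologicalSpace ℂ :=
  ⨅ u ∈ {u : ℂ → EReal | SubharmonicOnC Set.univ u},
    TopologicalSpace.induced u inferInstance

/-- `f` is finely holomorphic on the finely open set `D`: every point of `D` has a
compact fine neighborhood `K ⊆ D` on which `f` is a uniform limit of rational
functions with poles off `K`. -/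
def FinelyHolomorphicOn (D : Set ℂ) (f : ℂ → ℂ) : Prop :=
  ∀ z ∈ D, ∃ K : Set ℂ, IsCompact K ∧ K ⊆ D ∧
    (∃ V : Set ℂ, @IsOpen ℂ fineTopology V ∧ z ∈ V ∧ V ⊆ K) ∧
    ∀ ε : ℝ, 0 < ε → ∃ p q : Polynomial ℂ,
      (∀ w ∈ K, q.eval w ≠ 0) ∧ ∀ w ∈ K, ‖f w - p.eval w / q.eval w‖ ≤ ε

/-- The Wirtinger derivative `∂f/∂z̄` of `f : ℂ → ℂ` at `z`. -/
noncomputable def dbar (f : ℂ → ℂ) (z : ℂ) : ℂ :=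
  (fderiv ℝ f z 1 + Complex.I * fderiv ℝ f z Complex.I) / 2

/-- The graph of `f` over `E ⊆ ℂ`, as a subset of `ℂ²`. -/
def graphOn (f : ℂ → ℂ) (E : Set ℂ) : Set (Fin 2 → ℂ) :=
  (fun z => ![z, f z]) '' E

/-!
A basic fine neighbourhood of `z` is a finite intersection of sets `{a < u < b}` with `u`
subharmonic and `a < u z < b`. Since `u` is upper semicontinuous, `{u < b}` is a Euclidean
neighbourhood of `z`, and for `a < a' < u z` the Euclidean closure of the finely open set
`{u > a'}` stays inside `{u ≥ a'}`. Hence every fine neighbourhood contains `closure V ∩ N` for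
a fine neighbourhood `V` and a Euclidean neighbourhood `N` of `z`; cutting with a compact disc
in `N` (itself a fine neighbourhood, because real-linear functions are harmonic and so finely
continuous) gives the compact set.
-/

open Filter Topology Real

section InitialTopology

variable {X α : Type*} [TopologicalSpace X] [LinearOrder α] [TopologicalSpace α]
  [OrderTopology α]

abbrev initialTopology (S : Set (X → α)) : TopologicalSpace X :=
  ⨅ u ∈ S, TopologicalSpace.induced u inferInstance

theorem UpperSemicontinuous.eventually_mem_of_le {u : X → α} (hu : UpperSemicontinuous u) {z : X}
    {W : Set α} (hW : W ∈ 𝓝 (u z)) : ∀ᶠ w in 𝓝 z, u z ≤ u w → u w ∈ W := by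
  by_cases htop : ∃ b, u z < b
  · obtain ⟨b, hzb, hbW⟩ := exists_Ico_subset_of_mem_nhds hW htop
    filter_upwards [hu z b hzb] with w hwb hzw using hbW ⟨hzw, hwb⟩
  · push Not at htop
    exact Eventually.of_forall fun w hzw => le_antisymm (htop _) hzw ▸ mem_of_mem_nhds hW

theorem UpperSemicontinuous.mem_lift'_closure [DenselyOrdered α] {u : X → α}
    (hu : UpperSemicontinuous u) {z : X} {W : Set α} (hW : W ∈ 𝓝 (u z)) :
    {w | u w ≤ u z → u w ∈ W} ∈
      (@nhds X (TopologicalSpace.induced u inferInstance) z).lift' closure := by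
  rw [mem_lift'_sets (monotone_closure X)]
  by_cases hbot : ∃ l, l < u z
  · obtain ⟨l, hlz, hlW⟩ := exists_Ioc_subset_of_mem_nhds hW hbot
    obtain ⟨a, hla, haz⟩ := exists_between hlz
    have hclosure : closure (u ⁻¹' Ioi a) ⊆ u ⁻¹' Ici a :=
      closure_minimal (fun _ => le_of_lt) (hu.isClosed_preimage a)
    refine ⟨u ⁻¹' Ioi a, by rw [nhds_induced]; exact preimage_mem_comap (Ioi_mem_nhds haz),
      fun w hw hwz => ?_⟩
    exact hlW ⟨hla.trans_le (hclosure hw), hwz⟩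
  · push Not at hbot
    exact ⟨univ, univ_mem, fun w _ hwz => le_antisymm hwz (hbot _) ▸ mem_of_mem_nhds hW⟩

theorem UpperSemicontinuous.tendsto_lift'_closure_inf_nhds [DenselyOrdered α] {u : X → α}
    (hu : UpperSemicontinuous u) (z : X) :
    Tendsto u ((@nhds X (TopologicalSpace.induced u inferInstance) z).lift' closure ⊓ 𝓝 z)
      (𝓝 (u z)) := fun _ hW =>
  mem_inf_of_inter (hu.mem_lift'_closure hW) (hu.eventually_mem_of_le hW) fun w hw =>
    (le_total (u w) (u z)).elim hw.1 hw.2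

theorem lift'_closure_inf_nhds_le_nhds_initialTopology [DenselyOrdered α] {S : Set (X → α)}
    (hS : ∀ u ∈ S, UpperSemicontinuous u) (z : X) :
    (@nhds X (initialTopology S) z).lift' closure ⊓ 𝓝 z ≤ @nhds X (initialTopology S) z :=
  calc _ ≤ ⨅ u ∈ S, comap u (𝓝 (u z)) := le_iInf₂ fun u hu =>
        (((hS u hu).tendsto_lift'_closure_inf_nhds z).mono_left
          (inf_le_inf_right _ (lift'_mono (nhds_mono (iInf₂_le u hu)) le_rfl))).le_comap
    _ = _ := by rw [initialTopology, nhds_iInf]; simp only [nhds_iInf, nhds_induced]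

theorem exists_isCompact_subset_mem_nhds_initialTopology [LocallyCompactSpace X] [DenselyOrdered α]
    {S : Set (X → α)} (hS : ∀ u ∈ S, UpperSemicontinuous u)
    (hfiner : initialTopology S ≤ (inferInstance : TopologicalSpace X)) {z : X} {Ω : Set X}
    (hΩ : Ω ∈ @nhds X (initialTopology S) z) :
    ∃ K, IsCompact K ∧ K ⊆ Ω ∧ K ∈ @nhds X (initialTopology S) z := by
  obtain ⟨B, hB, N, hN, hBN⟩ :=
    mem_inf_iff_superset.1 (lift'_closure_inf_nhds_le_nhds_initialTopology hS z hΩ)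
  obtain ⟨V, hV, hVB⟩ := (mem_lift'_sets (monotone_closure X)).1 hB
  obtain ⟨C, hCz, hCN, hC⟩ := local_compact_nhds hN
  refine ⟨closure V ∩ C, hC.inter_left isClosed_closure,
    fun w hw => hBN ⟨hVB hw.1, hCN hw.2⟩, ?_⟩
  exact mem_of_superset (inter_mem hV (nhds_mono hfiner hCz))
    (inter_subset_inter_left _ subset_closure)

end InitialTopology

theorem erealSetIntegral_coe {s : Set ℝ} {f : ℝ → ℝ} (hf : IntegrableOn f s) :
    erealSetIntegral s (fun θ => (f θ : EReal)) = ((∫ θ in s, f θ : ℝ) : EReal) := by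
  have hpos : ∀ θ, erealToENNReal (f θ) = ENNReal.ofReal (f θ) := fun θ => by
    simp [erealToENNReal]
  have hneg : ∀ θ, erealToENNReal (-(f θ : EReal)) = ENNReal.ofReal (-f θ) := fun θ => by
    simp [erealToENNReal, ← EReal.coe_neg]
  have hpos_ne_top : ∫⁻ θ in s, ENNReal.ofReal (f θ) ≠ ⊤ :=
    ((lintegral_ofReal_le_lintegral_enorm f).trans_lt hf.2).ne
  have hneg_ne_top : ∫⁻ θ in s, ENNReal.ofReal (-f θ) ≠ ⊤ :=
    ((lintegral_ofReal_le_lintegral_enorm _).trans_lt hf.neg.2).ne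
  rw [integral_eq_lintegral_pos_part_sub_lintegral_neg_part hf, EReal.coe_sub,
    EReal.coe_ennreal_toReal hpos_ne_top, EReal.coe_ennreal_toReal hneg_ne_top]
  simp only [erealSetIntegral, hpos, hneg]

theorem subharmonicOnC_univ_coe_of_circleAverage_eq {f : ℂ → ℝ} (hf : Continuous f)
    (hmean : ∀ (a : ℂ) (r : ℝ), 0 < r → circleAverage f a r = f a) :
    SubharmonicOnC univ (fun w => (f w : EReal)) := by
  refine ⟨fun _ _ => EReal.coe_lt_top _,
    (EReal.continuous_coe_iff.2 hf).upperSemicontinuous.upperSemicontinuousOn _,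
    fun a r hr _ => le_of_eq ?_⟩
  have hint : IntegrableOn (fun θ => f (circleMap a r θ)) (Ioc 0 (2 * π)) :=
    (hf.comp (continuous_circleMap a r)).integrableOn_Ioc
  calc ((2 * π : ℝ) : EReal) * (f a : EReal)
      = ((∫ θ in Ioc 0 (2 * π), f (circleMap a r θ) : ℝ) : EReal) := by
        rw [← EReal.coe_mul, ← intervalIntegral.integral_of_le two_pi_pos.le, ← hmean a r hr,
          circleAverage_def, smul_eq_mul, mul_inv_cancel_left₀ two_pi_pos.ne']
    _ = _ := (erealSetIntegral_coe hint).symm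

theorem ContinuousLinearMap.circleAverage_eq_apply {E : Type*} [NormedAddCommGroup E]
    [NormedSpace ℝ E] [CompleteSpace E] (L : ℂ →L[ℝ] E) (c : ℂ) (R : ℝ) :
    circleAverage L c R = L c := by
  have h := L.circleAverage_comp_comm (f := id) (c := c) (R := R)
    continuous_id.continuousOn.circleIntegrable'
  rwa [differentiable_id.diffContOnCl.circleAverage] at h

theorem fineTopology_le_induced_clm (L : ℂ →L[ℝ] ℝ) :
    fineTopology ≤ TopologicalSpace.induced L inferInstance :=
  calc fineTopology ≤ TopologicalSpace.induced ((↑) ∘ L : ℂ → EReal) inferInstance :=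
        iInf₂_le _ <| subharmonicOnC_univ_coe_of_circleAverage_eq L.continuous
          fun a r _ => L.circleAverage_eq_apply a r
    _ = _ := by rw [← induced_compose, ← EReal.isEmbedding_coe.eq_induced]

theorem fineTopology_le : fineTopology ≤ (inferInstance : TopologicalSpace ℂ) := by
  rw [Complex.isUniformEmbedding_equivRealProd.isInducing.eq_induced]
  change _ ≤ TopologicalSpace.induced _ (.induced Prod.fst _ ⊓ .induced Prod.snd _)
  rw [induced_inf, induced_compose, induced_compose]
  exact le_inf (fineTopology_le_induced_clm Complex.reCLM)
    (fineTopology_le_induced_clm Complex.imCLM)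

/-- **Lemma.** Every point of a finely open set `Ω ⊆ ℂ` has a compact subset of `Ω`
as a fine neighborhood. -/
theorem compact_fine_neighborhood (Ω : Set ℂ) (hΩ : @IsOpen ℂ fineTopology Ω)
    (z : ℂ) (hz : z ∈ Ω) :
    ∃ K : Set ℂ, IsCompact K ∧ K ⊆ Ω ∧
      ∃ V : Set ℂ, @IsOpen ℂ fineTopology V ∧ z ∈ V ∧ V ⊆ K := by
  obtain ⟨K, hK, hKΩ, hKz⟩ := exists_isCompact_subset_mem_nhds_initialTopology
    (fun _ hu => upperSemicontinuousOn_univ_iff.1 hu.2.1) fineTopology_le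
    (@IsOpen.mem_nhds ℂ fineTopology _ _ hΩ hz)
  exact ⟨K, hK, hKΩ, @interior ℂ fineTopology K, @isOpen_interior ℂ fineTopology K,
    @mem_interior_iff_mem_nhds ℂ fineTopology _ _ |>.2 hKz, @interior_subset ℂ fineTopology K⟩
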